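/- Smallwood–Sondik backup closure: let Γ be a nonempty finite set of vectors α : S → ℝ and let V : Δ → ℝ be given by V(b) = min_{α ∈ Γ} Σ_s α(s) · b(s). Then for every belief b ∈ Δ, (T V)(b) = min over pairs (a, g) with a ∈ A and g : O → Γ of Σ_s b s · ( c a s + β · Σ_o Σ_{s'} P a s s' · Q a s' o · (g o)(s') ). In particular, one Bellman backup of a pointwise minimum of finitely many linear functions of the belief is again a pointwise minimum of finitely many linear functions of the belief. -/

import Mathlib

open Finset

/-- A belief over a finite state space: a nonnegative function summing to one. -/
def IsBelief {S : Type} [Fintype S] (b : S → ℝ) : Prop :=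
  (∀ s, 0 ≤ b s) ∧ ∑ s, b s = 1

/-- The set of beliefs, as a subtype. -/
def Belief (S : Type) [Fintype S] : Type := {b : S → ℝ // IsBelief b}

/-- Probability of observation `o` under action `a` starting from belief `b`:
`σ(b,a,o) = Σ_s Σ_{s'} b s · P a s s' · Q a s' o`. -/
noncomputable def obsProb {S A O : Type} [Fintype S] [Fintype A] [Fintype O]
    (P : A → S → S → ℝ) (Q : A → S → O → ℝ) (b : Belief S) (a : A) (o : O) : ℝ :=
  ∑ s, ∑ s', b.1 s * P a s s' * Q a s' o

/-- The Bayes posterior belief `τ(b,a,o)`; equal to the fixed belief `b₀` when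
`σ(b,a,o) = 0`. -/
noncomputable def bayesTau {S A O : Type} [Fintype S] [Fintype A] [Fintype O]
    (P : A → S → S → ℝ) (hP0 : ∀ a s s', 0 ≤ P a s s')
    (Q : A → S → O → ℝ) (hQ0 : ∀ a s' o, 0 ≤ Q a s' o)
    (b₀ : Belief S) (b : Belief S) (a : A) (o : O) : Belief S :=
  if h : 0 < obsProb P Q b a o then
    ⟨fun s' => (∑ s, b.1 s * P a s s' * Q a s' o) / obsProb P Q b a o, by
      constructor
      · intro s'
        apply div_nonneg _ (le_of_lt h)
        exact Finset.sum_nonneg fun s _ =>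
          mul_nonneg (mul_nonneg (b.2.1 s) (hP0 a s s')) (hQ0 a s' o)
      · rw [← Finset.sum_div, div_eq_one_iff_eq (ne_of_gt h), obsProb, Finset.sum_comm]⟩
  else b₀

/-- The coordinator's Bellman operator:
`(T V)(b) = min_a [ Σ_s b s · c a s + β · Σ_o σ(b,a,o) · V(τ(b,a,o)) ]`. -/
noncomputable def bellmanOp {S A O : Type} [Fintype S] [Fintype A] [Fintype O] [Nonempty A]
    (P : A → S → S → ℝ) (hP0 : ∀ a s s', 0 ≤ P a s s')
    (Q : A → S → O → ℝ) (hQ0 : ∀ a s' o, 0 ≤ Q a s' o)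
    (c : A → S → ℝ) (β : ℝ) (b₀ : Belief S)
    (V : Belief S → ℝ) (b : Belief S) : ℝ :=
  Finset.univ.inf' Finset.univ_nonempty fun a =>
    (∑ s, b.1 s * c a s) +
      β * ∑ o, obsProb P Q b a o * V (bayesTau P hP0 Q hQ0 b₀ b a o)

/-!
By Bayes' rule `σ(b,a,o) · τ(b,a,o)(s')` is the joint probability of `s'` and `o`, so the
normalisation cancels and `σ(b,a,o) · V(τ(b,a,o)) = min_{α ∈ Γ} Σ_{s'} α s' · Pr(s', o | b, a)`
is a minimum of linear functions of `b` (when `σ = 0` both sides vanish). A sum over `o` of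
minima over `Γ` is the minimum over choices `g : O → Γ` of the sums, and the nonnegative
factor `β`, the stage cost and the outer minimum over `a` all commute with these minima.
-/

theorem Finset.mul_inf'_of_nonneg {ι α : Type*} [MulZeroClass α] [LinearOrder α] [PosMulMono α]
    (s : Finset ι) (hs : s.Nonempty) (f : ι → α) {a : α} (ha : 0 ≤ a) :
    a * s.inf' hs f = s.inf' hs fun i => a * f i :=
  map_finset_inf' (OrderHom.mk (a * ·) fun _ _ h => mul_le_mul_of_nonneg_left h ha) hs f

theorem Finset.add_inf' {ι α : Type*} [Add α] [LinearOrder α] [AddLeftMono α]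
    (s : Finset ι) (hs : s.Nonempty) (f : ι → α) (a : α) :
    a + s.inf' hs f = s.inf' hs fun i => a + f i :=
  map_finset_inf' (OrderHom.mk (a + ·) add_right_mono) hs f

theorem Finset.inf'_univ_prod {α β γ : Type*} [Fintype α] [Fintype β] [Nonempty α] [Nonempty β]
    [SemilatticeInf γ] (f : α × β → γ) :
    univ.inf' univ_nonempty f =
      univ.inf' univ_nonempty fun a => univ.inf' univ_nonempty fun b => f (a, b) :=
  eq_of_forall_le_iff fun _ => by simp

theorem Finset.sum_inf'_eq_inf'_pi {ι κ M : Type*} [Fintype ι] [DecidableEq ι] [AddCommMonoid M]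
    [LinearOrder M] [IsOrderedAddMonoid M] (s : Finset κ) (hs : s.Nonempty) (f : ι → κ → M) :
    haveI : Nonempty s := hs.to_subtype
    ∑ i, s.inf' hs (f i) =
      (univ : Finset (ι → s)).inf' univ_nonempty fun g : ι → s => ∑ i, f i (g i) := by
  refine le_antisymm (le_inf' _ _ fun (g : ι → s) _ => sum_le_sum fun i _ => inf'_le _ (g i).2) ?_
  choose g hgs hg using fun i => s.exists_mem_eq_inf' hs (f i)
  calc _ ≤ ∑ i, f i (g i) :=
        inf'_le (fun g : ι → s => ∑ i, f i (g i)) (mem_univ fun i => ⟨g i, hgs i⟩)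
    _ = ∑ i, s.inf' hs (f i) := sum_congr rfl fun i _ => (hg i).symm

/-- The probability of reaching `s'` and observing `o` from `b` under `a`: the numerator of the
posterior `τ(b,a,o)(s')`. -/
noncomputable def jointProb {S A O : Type} [Fintype S] (P : A → S → S → ℝ) (Q : A → S → O → ℝ)
    (b : Belief S) (a : A) (o : O) (s' : S) : ℝ :=
  ∑ s, b.1 s * P a s s' * Q a s' o

section

variable {S A O : Type} [Fintype S] {P : A → S → S → ℝ} {Q : A → S → O → ℝ}

lemma jointProb_nonneg (hP0 : ∀ a s s', 0 ≤ P a s s') (hQ0 : ∀ a s' o, 0 ≤ Q a s' o)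
    (b : Belief S) (a : A) (o : O) (s' : S) : 0 ≤ jointProb P Q b a o s' :=
  sum_nonneg fun s _ => mul_nonneg (mul_nonneg (b.2.1 s) (hP0 a s s')) (hQ0 a s' o)

variable [Fintype O]

lemma sum_sum_mul_jointProb (b : Belief S) (a : A) (v : O → S → ℝ) :
    ∑ o, ∑ s', v o s' * jointProb P Q b a o s' =
      ∑ s, b.1 s * ∑ o, ∑ s', P a s s' * Q a s' o * v o s' := by
  simp only [jointProb, mul_sum]
  calc _ = ∑ o, ∑ s, ∑ s', v o s' * (b.1 s * P a s s' * Q a s' o) :=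
        sum_congr rfl fun o _ => sum_comm
    _ = _ := by
      rw [sum_comm]
      exact sum_congr rfl fun s _ => sum_congr rfl fun o _ => sum_congr rfl fun s' _ => by ring

variable [Fintype A]

lemma sum_jointProb (b : Belief S) (a : A) (o : O) :
    ∑ s', jointProb P Q b a o s' = obsProb P Q b a o :=
  sum_comm

lemma obsProb_nonneg (hP0 : ∀ a s s', 0 ≤ P a s s') (hQ0 : ∀ a s' o, 0 ≤ Q a s' o)
    (b : Belief S) (a : A) (o : O) : 0 ≤ obsProb P Q b a o :=
  sum_jointProb (P := P) b a o ▸ sum_nonneg fun s' _ => jointProb_nonneg hP0 hQ0 b a o s'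

lemma obsProb_mul_bayesTau (hP0 : ∀ a s s', 0 ≤ P a s s') (hQ0 : ∀ a s' o, 0 ≤ Q a s' o)
    (b₀ b : Belief S) (a : A) (o : O) (s' : S) :
    obsProb P Q b a o * (bayesTau P hP0 Q hQ0 b₀ b a o).1 s' = jointProb P Q b a o s' := by
  by_cases h : 0 < obsProb P Q b a o
  · rw [show bayesTau P hP0 Q hQ0 b₀ b a o = _ from dif_pos h]
    exact mul_div_cancel₀ _ h.ne'
  · have hjoint : ∀ s' ∈ univ, jointProb P Q b a o s' = 0 := by
      rw [← sum_eq_zero_iff_of_nonneg fun s' _ => jointProb_nonneg hP0 hQ0 b a o s', sum_jointProb]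
      exact le_antisymm (not_lt.1 h) (obsProb_nonneg hP0 hQ0 b a o)
    rw [hjoint s' (mem_univ s'), ← sum_jointProb, sum_eq_zero hjoint, zero_mul]

lemma obsProb_mul_inf'_linear (hP0 : ∀ a s s', 0 ≤ P a s s') (hQ0 : ∀ a s' o, 0 ≤ Q a s' o)
    (b₀ b : Belief S) (a : A) (o : O) (Γ : Finset (S → ℝ)) (hΓ : Γ.Nonempty) :
    obsProb P Q b a o * Γ.inf' hΓ (fun α => ∑ s, α s * (bayesTau P hP0 Q hQ0 b₀ b a o).1 s) =
      Γ.inf' hΓ fun α => ∑ s', α s' * jointProb P Q b a o s' := by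
  rw [mul_inf'_of_nonneg _ _ _ (obsProb_nonneg hP0 hQ0 b a o)]
  refine inf'_congr _ rfl fun α _ => ?_
  rw [mul_sum]
  refine sum_congr rfl fun s' _ => ?_
  rw [← obsProb_mul_bayesTau hP0 hQ0 b₀]
  ring

lemma actionValue_eq_inf'_pi [DecidableEq O] (hP0 : ∀ a s s', 0 ≤ P a s s')
    (hQ0 : ∀ a s' o, 0 ≤ Q a s' o) (c : A → S → ℝ) {β : ℝ} (hβ0 : 0 ≤ β) (b₀ b : Belief S) (a : A)
    (Γ : Finset (S → ℝ)) (hΓ : Γ.Nonempty) :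
    haveI : Nonempty Γ := hΓ.to_subtype
    (∑ s, b.1 s * c a s) + β * ∑ o, obsProb P Q b a o *
        Γ.inf' hΓ (fun α => ∑ s, α s * (bayesTau P hP0 Q hQ0 b₀ b a o).1 s) =
      (univ : Finset (O → Γ)).inf' univ_nonempty fun g =>
        ∑ s, b.1 s * (c a s + β * ∑ o, ∑ s', P a s s' * Q a s' o * (g o).1 s') := by
  simp only [obsProb_mul_inf'_linear hP0 hQ0 b₀]
  rw [sum_inf'_eq_inf'_pi, mul_inf'_of_nonneg _ _ _ hβ0, add_inf']
  refine inf'_congr _ rfl fun g _ => ?_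
  rw [sum_sum_mul_jointProb b a fun o => (g o).1, mul_sum, ← sum_add_distrib]
  exact sum_congr rfl fun s _ => by ring

end

theorem smallwood_sondik_backup_general {S A O : Type} [Fintype S] [Fintype A] [Fintype O]
    [Nonempty A]
    (P : A → S → S → ℝ) (hP0 : ∀ a s s', 0 ≤ P a s s')
    (Q : A → S → O → ℝ) (hQ0 : ∀ a s' o, 0 ≤ Q a s' o)
    (c : A → S → ℝ) (β : ℝ) (hβ0 : 0 ≤ β) (b₀ : Belief S)
    (Γ : Finset (S → ℝ)) (hΓ : Γ.Nonempty) :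
    ∀ b : Belief S,
      bellmanOp P hP0 Q hQ0 c β b₀
          (fun b' : Belief S => Γ.inf' hΓ fun α : S → ℝ => ∑ s, α s * b'.1 s) b =
        haveI := Classical.decEq O
        haveI : Nonempty {α : S → ℝ // α ∈ Γ} := hΓ.to_subtype
        (Finset.univ : Finset (A × (O → {α : S → ℝ // α ∈ Γ}))).inf'
          Finset.univ_nonempty fun p =>
            ∑ s, b.1 s *
              (c p.1 s + β * ∑ o, ∑ s', P p.1 s s' * Q p.1 s' o * (p.2 o).1 s') := by
  classical
  intro b
  have : Nonempty Γ := hΓ.to_subtype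
  rw [inf'_univ_prod]
  exact inf'_congr _ rfl fun a _ => actionValue_eq_inf'_pi hP0 hQ0 c hβ0 b₀ b a Γ hΓ

/-- Smallwood–Sondik backup closure: one Bellman backup of a pointwise minimum of
finitely many linear functions of the belief is again a pointwise minimum of finitely
many linear functions of the belief, indexed by pairs `(a, g)` with `a ∈ A` and
`g : O → Γ`. -/
theorem smallwood_sondik_backup {S A O : Type} [Fintype S] [Fintype A] [Fintype O]
    [Nonempty S] [Nonempty A] [Nonempty O]
    (P : A → S → S → ℝ) (hP0 : ∀ a s s', 0 ≤ P a s s')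
    (hP1 : ∀ a s, ∑ s', P a s s' = 1)
    (Q : A → S → O → ℝ) (hQ0 : ∀ a s' o, 0 ≤ Q a s' o)
    (hQ1 : ∀ a s', ∑ o, Q a s' o = 1)
    (c : A → S → ℝ) (β : ℝ) (hβ0 : 0 ≤ β) (hβ1 : β < 1) (b₀ : Belief S)
    (Γ : Finset (S → ℝ)) (hΓ : Γ.Nonempty) :
    ∀ b : Belief S,
      bellmanOp P hP0 Q hQ0 c β b₀
          (fun b' : Belief S => Γ.inf' hΓ fun α : S → ℝ => ∑ s, α s * b'.1 s) b =
        haveI := Classical.decEq O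
        haveI : Nonempty {α : S → ℝ // α ∈ Γ} := hΓ.to_subtype
        (Finset.univ : Finset (A × (O → {α : S → ℝ // α ∈ Γ}))).inf'
          Finset.univ_nonempty fun p =>
            ∑ s, b.1 s *
              (c p.1 s + β * ∑ o, ∑ s', P p.1 s s' * Q p.1 s' o * (p.2 o).1 s') :=
  smallwood_sondik_backup_general P hP0 Q hQ0 c β hβ0 b₀ Γ hΓ
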